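/- Under common preferences, a homogeneous arrangement (l,k) is adequate if and only if l = k or both l ≥ min{|D|,|H|} and k ≥ min{|D|,|H|}. -/

import Mathlib

/- Formal model of the two-step interview-then-match process of
Echenique-et-al-style markets: Step 1 computes the interview matching by
hospital-proposing deferred acceptance (with responsive, capacity-constrained
choice functions); Step 2 computes the final one-to-one matching by
doctor-proposing deferred acceptance on preferences restricted to interview
partners. -/

open Finset

section Model

variable {D H : Type*} [Fintype D] [Fintype H] [DecidableEq D] [DecidableEq H]

/-- The (at most) `n` best elements of `s` according to `rank` (lower rank = better). -/
def topN {α : Type*} [DecidableEq α] (rank : α → ℕ) (n : ℕ) (s : Finset α) : Finset α :=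
  s.filter fun x => (s.filter fun y => rank y < rank x).card < n

/-- A market: strict preferences represented by rank functions
(lower rank = more preferred) together with acceptability predicates. -/
structure Market (D H : Type*) where
  rankDH : D → H → ℕ
  accD : D → H → Bool
  rankHD : H → D → ℕ
  accH : H → D → Bool

/-- Strict preferences: rank functions are injective. -/
def Market.Strict (M : Market D H) : Prop :=
  (∀ d, Function.Injective (M.rankDH d)) ∧ (∀ h, Function.Injective (M.rankHD h))

/-- Hospital `h` proposes to its `ι h` best acceptable doctors that have not rejected it. -/
def hProps (M : Market D H) (ι : H → ℕ) (R : Finset (H × D)) (h : H) : Finset D :=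
  topN (M.rankHD h) (ι h) (univ.filter fun d => M.accH h d ∧ (h, d) ∉ R)

/-- Doctor `d` keeps her `κ d` best acceptable proposals. -/
def dKeeps (M : Market D H) (ι : H → ℕ) (κ : D → ℕ) (R : Finset (H × D)) (d : D) :
    Finset H :=
  topN (fun h => M.rankDH d h) (κ d) (univ.filter fun h => M.accD d h ∧ d ∈ hProps M ι R h)

/-- One round of hospital-proposing deferred acceptance: the (cumulative) rejection set
grows by the proposals not kept. -/
def iStep (M : Market D H) (ι : H → ℕ) (κ : D → ℕ) (R : Finset (H × D)) :
    Finset (H × D) :=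
  R ∪ univ.filter fun p : H × D => p.2 ∈ hProps M ι R p.1 ∧ p.1 ∉ dKeeps M ι κ R p.2

/-- Rejection set at the end of hospital-proposing DA (interview step). -/
def iRej (M : Market D H) (ι : H → ℕ) (κ : D → ℕ) : Finset (H × D) :=
  (iStep M ι κ)^[Fintype.card D * Fintype.card H] ∅

/-- The interview matching (the hospital-optimal stable many-to-many matching) computed
by hospital-proposing deferred acceptance: pairs `(h, d)` such that `h` interviews `d`. -/
def interviews (M : Market D H) (ι : H → ℕ) (κ : D → ℕ) : Finset (H × D) :=
  univ.filter fun p : H × D =>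
    p.2 ∈ hProps M ι (iRej M ι κ) p.1 ∧ p.1 ∈ dKeeps M ι κ (iRej M ι κ) p.2

/-- Doctor `d` proposes to her best interview partner that has not rejected her. -/
def dProps (M : Market D H) (V : Finset (H × D)) (S : Finset (D × H)) (d : D) :
    Finset H :=
  topN (M.rankDH d) 1 (univ.filter fun h => (h, d) ∈ V ∧ (d, h) ∉ S)

/-- Hospital `h` keeps its best proposal. -/
def hKeeps (M : Market D H) (V : Finset (H × D)) (S : Finset (D × H)) (h : H) :
    Finset D :=
  topN (M.rankHD h) 1 (univ.filter fun d => h ∈ dProps M V S d)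

/-- One round of doctor-proposing DA on preferences restricted to the interview matching `V`. -/
def mStep (M : Market D H) (V : Finset (H × D)) (S : Finset (D × H)) : Finset (D × H) :=
  S ∪ univ.filter fun p : D × H => p.2 ∈ dProps M V S p.1 ∧ p.1 ∉ hKeeps M V S p.2

/-- Rejection set at the end of the doctor-proposing DA of the matching step. -/
def mRej (M : Market D H) (V : Finset (H × D)) : Finset (D × H) :=
  (mStep M V)^[Fintype.card D * Fintype.card H] ∅

/-- The final matching: doctor-proposing DA on preferences restricted to interviews `V`. -/
def finalMatch (M : Market D H) (V : Finset (H × D)) : Finset (D × H) :=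
  univ.filter fun p : D × H =>
    p.2 ∈ dProps M V (mRej M V) p.1 ∧ p.1 ∈ hKeeps M V (mRej M V) p.2

/-- The `(ι,κ)`-matching: the culmination of the two-step process. -/
def ikMatching (M : Market D H) (ι : H → ℕ) (κ : D → ℕ) : Finset (D × H) :=
  finalMatch M (interviews M ι κ)

/-- `(d, h)` is a blocking pair of `μ` (w.r.t. the true, unrestricted preferences). -/
def Blocks (M : Market D H) (μ : Finset (D × H)) (d : D) (h : H) : Prop :=
  M.accD d h ∧ M.accH h d ∧ (d, h) ∉ μ ∧
    (∀ h', (d, h') ∈ μ → M.rankDH d h < M.rankDH d h') ∧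
    (∀ d', (d', h) ∈ μ → M.rankHD h d < M.rankHD h d')

instance (M : Market D H) (μ : Finset (D × H)) (d : D) (h : H) :
    Decidable (Blocks M μ d h) := by
  unfold Blocks; infer_instance

/-- A matching is stable if it admits no blocking pair. -/
def Stable (M : Market D H) (μ : Finset (D × H)) : Prop := ∀ d h, ¬ Blocks M μ d h

/-- `(ι,κ)` is adequate at `M` if the `(ι,κ)`-matching is stable. -/
def Adequate (M : Market D H) (ι : H → ℕ) (κ : D → ℕ) : Prop :=
  Stable M (ikMatching M ι κ)

/-- One-to-one matching (as a set of pairs). -/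
def IsMatching (μ : Finset (D × H)) : Prop :=
  (∀ d h h', (d, h) ∈ μ → (d, h') ∈ μ → h = h') ∧
    (∀ d d' h, (d, h) ∈ μ → (d', h) ∈ μ → d = d')

/-- Common preferences: all doctors rank the hospitals identically, all hospitals rank
the doctors identically, everyone is mutually acceptable (and preferences are strict). -/
def CommonPrefs (M : Market D H) : Prop :=
  M.Strict ∧ (∀ d d', M.rankDH d = M.rankDH d') ∧ (∀ h h', M.rankHD h = M.rankHD h') ∧
    ∀ d h, M.accD d h ∧ M.accH h d

/-- Number of hospitals matched under `μ`. -/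
def matchedHospitals (μ : Finset (D × H)) : ℕ :=
  (univ.filter fun h : H => ∃ d, (d, h) ∈ μ).card

/-- Number of blocking pairs of `μ`. -/
def blockingCount (M : Market D H) (μ : Finset (D × H)) : ℕ :=
  (univ.filter fun p : D × H => Blocks M μ p.1 p.2).card

end Model

/-- `(ι,κ)` is globally adequate: adequate at every (strict) preference profile. -/
def GloballyAdequate (D H : Type*) [Fintype D] [Fintype H] [DecidableEq D] [DecidableEq H]
    (ι : H → ℕ) (κ : D → ℕ) : Prop :=
  ∀ M : Market D H, M.Strict → Adequate M ι κ

variable {D H : Type*} [Fintype D] [Fintype H] [DecidableEq D] [DecidableEq H]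


/-!
Under common rankings everything is determined by ranking positions. Cut the hospitals, in
ranking order, into consecutive blocks of `k` and the doctors into blocks of `l`. In the
interview stage the `b`-th hospital block ends up having rejected exactly the doctors of the
earlier blocks (`blockIRej`), so it interviews exactly the `b`-th doctor block
(`blockInterviews`): counting proposals shows that this rejection set is preserved by a round
of deferred acceptance and that no smaller one is a fixed point. In the matching stage every
block is a small market with common rankings, in which doctor-proposing deferred acceptance
pairs the doctor and the hospital at the same offset (`blockMatching`). Adequacy thereby
becomes arithmetic: if `l ≠ k` and `min l k < min |D| |H|`, the doctor and the hospital at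
position `min l k` block; otherwise, on the smaller side every agent is matched to the partner
at the same position, and nothing blocks.
-/

section Position

variable {α : Type*} [Fintype α] {f : α → ℕ} {x y : α}

def position (f : α → ℕ) (x : α) : ℕ := #{y | f y < f x}

lemma position_le_position (h : f x ≤ f y) : position f x ≤ position f y :=
  card_le_card (monotone_filter_right _ fun _ _ hz => hz.trans_le h)

lemma position_lt_position (h : f x < f y) : position f x < position f y := by
  refine card_lt_card ((ssubset_iff_of_subset ?_).2 ⟨x, by simp [h], by simp⟩)
  exact monotone_filter_right _ fun _ _ hz => hz.trans h

lemma position_lt_position_iff : position f x < position f y ↔ f x < f y :=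
  ⟨fun h => lt_of_not_ge fun h' => (position_le_position h').not_gt h, position_lt_position⟩

lemma position_lt_card (x : α) : position f x < Fintype.card α :=
  card_lt_univ_of_notMem (x := x) (by simp)

lemma position_injective (hf : Function.Injective f) : Function.Injective (position f) := by
  intro x y hxy
  refine hf (le_antisymm ?_ ?_) <;>
    exact not_lt.1 fun h => (position_lt_position h).ne (by rw [hxy])

lemma image_position (hf : Function.Injective f) :
    univ.image (position f) = range (Fintype.card α) := by
  refine eq_of_subset_of_card_le (fun m hm => ?_) ?_
  · obtain ⟨x, -, rfl⟩ := mem_image.1 hm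
    exact mem_range.2 (position_lt_card x)
  · rw [card_range, card_image_of_injective _ (position_injective hf), card_univ]

lemma forall_position_iff (hf : Function.Injective f) {P : ℕ → Prop} :
    (∀ x, P (position f x)) ↔ ∀ m < Fintype.card α, P m := by
  simp only [← mem_range, ← image_position hf, mem_image, mem_univ, true_and,
    forall_exists_index, forall_apply_eq_imp_iff]

lemma exists_position_eq (hf : Function.Injective f) {m : ℕ} (hm : m < Fintype.card α) :
    ∃ x, position f x = m := by
  simpa using (image_position hf).ge (mem_range.2 hm)

lemma exists_position_div_mod (hf : Function.Injective f) {k b o : ℕ} (ho : o < k)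
    (hlt : k * b + o < Fintype.card α) : ∃ x, position f x / k = b ∧ position f x % k = o := by
  obtain ⟨x, hx⟩ := exists_position_eq hf hlt
  exact ⟨x, (Nat.div_mod_unique (Nat.zero_lt_of_lt ho)).2 ⟨by rw [hx, add_comm], ho⟩⟩

lemma card_eq_of_mem_iff_Ico (hf : Function.Injective f) {s : Finset α} {a b : ℕ}
    (hs : ∀ y, y ∈ s ↔ a ≤ position f y ∧ position f y < b) :
    #s = min b (Fintype.card α) - a := by
  have hIco : (range (Fintype.card α)).filter (fun m => a ≤ m ∧ m < b) =
      Ico a (min b (Fintype.card α)) := by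
    ext m; simp only [mem_filter, mem_range, mem_Ico]; omega
  obtain rfl : s = ({y | a ≤ position f y ∧ position f y < b} : Finset α) := by
    ext y; simp [hs]
  rw [← Nat.card_Ico, ← hIco, ← image_position hf, filter_image,
    card_image_of_injective _ (position_injective hf)]

lemma card_position_Ico (hf : Function.Injective f) (a b : ℕ) :
    #{x | a ≤ position f x ∧ position f x < b} = min b (Fintype.card α) - a :=
  card_eq_of_mem_iff_Ico hf fun _ => by simp

end Position

section TopN

variable {α : Type*} [DecidableEq α] {f : α → ℕ} {n : ℕ} {s : Finset α} {x : α}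

lemma mem_topN : x ∈ topN f n s ↔ x ∈ s ∧ #{y ∈ s | f y < f x} < n :=
  mem_filter

lemma mem_topN_one : x ∈ topN f 1 s ↔ x ∈ s ∧ ∀ y ∈ s, ¬ f y < f x := by
  simp [mem_topN, filter_eq_empty_iff]

lemma topN_eq_self (h : #s ≤ n) : topN f n s = s := by
  refine filter_true_of_mem fun x hx => ?_
  exact (card_lt_card (filter_ssubset.2 ⟨x, hx, lt_irrefl (f x)⟩)).trans_le h

lemma mem_topN_of_mem_iff_Ico [Fintype α] (hf : Function.Injective f) {a b : ℕ}
    (hs : ∀ y, y ∈ s ↔ a ≤ position f y ∧ position f y < b) :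
    x ∈ topN f n s ↔ a ≤ position f x ∧ position f x < b ∧ position f x < a + n := by
  obtain rfl : s = ({y | a ≤ position f y ∧ position f y < b} : Finset α) := by
    ext y; simp [hs]
  rw [mem_topN, mem_filter]
  simp only [mem_univ, true_and, ← and_assoc]
  refine and_congr_right fun ⟨hax, hxb⟩ => ?_
  rw [card_eq_of_mem_iff_Ico hf (a := a) (b := position f x) fun y => by
    simp only [mem_filter, mem_univ, true_and]
    rw [← position_lt_position_iff (f := f)]
    omega]
  have := position_lt_card (f := f) x
  omega

end TopN

lemma Finset.isFixedPt_iterate_card {β : Type*} [Fintype β] [DecidableEq β]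
    {g : Finset β → Finset β} (hg : ∀ s, s ⊆ g s) :
    Function.IsFixedPt g (g^[Fintype.card β] ∅) := by
  have key : ∀ n, g (g^[n] ∅) = g^[n] ∅ ∨ n ≤ #(g^[n] ∅) := by
    intro n
    induction n with
    | zero => simp
    | succ n ih =>
      rw [Function.iterate_succ_apply']
      by_cases hfix : g (g^[n] ∅) = g^[n] ∅
      · left; rw [hfix, hfix]
      · right
        have := card_lt_card ((hg _).ssubset_of_ne (Ne.symm hfix))
        have := ih.resolve_left hfix
        omega
  refine (key _).elim id fun hcard => ?_
  rw [eq_univ_of_card _ (le_antisymm (card_le_univ _) hcard)]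
  exact (subset_univ _).antisymm (hg _)

lemma Finset.iterate_card_eq_of_invariant {β : Type*} [Fintype β] [DecidableEq β]
    {g : Finset β → Finset β} (hg : ∀ s, s ⊆ g s) {S : Finset β}
    (hmaps : ∀ s ⊆ S, g s ⊆ S) (hfix : ∀ s ⊆ S, g s = s → S ⊆ s) :
    g^[Fintype.card β] ∅ = S := by
  have hsub : ∀ n, g^[n] ∅ ⊆ S := by
    intro n
    induction n with
    | zero => exact empty_subset _
    | succ n ih => rw [Function.iterate_succ_apply']; exact hmaps _ ih
  exact (hsub _).antisymm (hfix _ (hsub _) (isFixedPt_iterate_card hg))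

namespace Nat

variable {l q b : ℕ}

lemma le_div_iff_mul_le_left (hl : 0 < l) : b ≤ q / l ↔ l * b ≤ q := by
  rw [Nat.le_div_iff_mul_le hl, mul_comm]

lemma div_lt_iff_lt_mul_left (hl : 0 < l) : q / l < b ↔ q < l * b := by
  rw [Nat.div_lt_iff_lt_mul hl, mul_comm]

lemma div_eq_iff_mul_le_lt (hl : 0 < l) : q / l = b ↔ l * b ≤ q ∧ q < l * b + l := by
  rw [le_antisymm_iff, ← Nat.lt_succ_iff, div_lt_iff_lt_mul_left hl, le_div_iff_mul_le_left hl,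
    Nat.succ_eq_add_one, mul_add_one, and_comm]

lemma lt_iff_mod_lt_mod_of_div_eq {q' : ℕ} (h : q / l = q' / l) : q < q' ↔ q % l < q' % l := by
  have := Nat.div_add_mod q l
  have := Nat.div_add_mod q' l
  rw [h] at *
  omega

lemma div_eq_and_le_mod_iff {o : ℕ} (hl : 0 < l) :
    q / l = b ∧ o ≤ q % l ↔ l * b + o ≤ q ∧ q < l * b + l := by
  have := Nat.div_add_mod q l
  constructor
  · rintro ⟨rfl, ho⟩
    have := Nat.mod_lt q hl
    omega
  · intro h
    obtain rfl := (div_eq_iff_mul_le_lt hl).2 ⟨by omega, h.2⟩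
    omega

end Nat

section BlockArithmetic

variable {l k m n q p : ℕ}

def BlockMatched (l k q p : ℕ) : Prop := q / l = p / k ∧ q % l = p % k

instance (l k q p : ℕ) : Decidable (BlockMatched l k q p) :=
  inferInstanceAs (Decidable (_ ∧ _))

lemma blockMatched_comm : BlockMatched l k q p ↔ BlockMatched k l p q :=
  and_congr eq_comm eq_comm

lemma blockMatched_iff (hk : 0 < k) :
    BlockMatched l k q p ↔ p = k * (q / l) + q % l ∧ q % l < k := by
  rw [BlockMatched, eq_comm (a := q / l), eq_comm (a := q % l), Nat.div_mod_unique hk, add_comm,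
    eq_comm]

lemma BlockMatched.left_unique {q' : ℕ} (h : BlockMatched l k q p)
    (h' : BlockMatched l k q' p) : q = q' := by
  rw [← Nat.div_add_mod q l, ← Nat.div_add_mod q' l, h.1, h.2, h'.1, h'.2]

lemma blockMatched_self_iff (hl : 0 < l) : BlockMatched l l q p ↔ p = q := by
  rw [blockMatched_iff hl, Nat.div_add_mod]
  exact and_iff_left (Nat.mod_lt q hl)

lemma blockMatched_iff_eq_of_lt (hql : q < l) (hqk : q < k) : BlockMatched l k q p ↔ p = q := by
  rw [blockMatched_iff (Nat.zero_lt_of_lt hqk), Nat.div_eq_of_lt hql, Nat.mod_eq_of_lt hql]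
  simp [hqk]

def PositionsBlock (l k m n q p : ℕ) : Prop :=
  ¬ BlockMatched l k q p ∧ (∀ p' < n, BlockMatched l k q p' → p < p') ∧
    ∀ q' < m, BlockMatched l k q' p → q < q'

lemma positionsBlock_comm : PositionsBlock l k m n q p ↔ PositionsBlock k l n m p q := by
  simp only [PositionsBlock, blockMatched_comm (l := l)]
  tauto

lemma not_positionsBlock_of_diagonal
    (hdiag : ∀ q' < m, ∀ p', BlockMatched l k q' p' ↔ p' = q') (hq : q < m) (hp : p < n) :
    ¬ PositionsBlock l k m n q p := by
  rintro ⟨hqp, hd, hh⟩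
  rcases lt_trichotomy q p with hlt | rfl | hgt
  · exact (hd q (hlt.trans hp) ((hdiag q hq q).2 rfl)).not_gt hlt
  · exact hqp ((hdiag q hq q).2 rfl)
  · exact (hh p (hgt.trans hq) ((hdiag p (hgt.trans hq) p).2 rfl)).not_gt hgt

lemma positionsBlock_self (hk : 0 < k) (hkl : k < l) :
    PositionsBlock l k m n k k := by
  have hunmatched : ∀ p', ¬ BlockMatched l k k p' := fun p' h => by
    have := h.2 ▸ Nat.mod_lt p' hk
    rw [Nat.mod_eq_of_lt hkl] at this
    exact lt_irrefl k this
  refine ⟨hunmatched k, fun p' _ h => (hunmatched p' h).elim, fun q' _ h => ?_⟩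
  have := ((Nat.div_eq_iff_mul_le_lt (hk.trans hkl)).1 (h.1.trans (Nat.div_self hk))).1
  omega

theorem forall_not_positionsBlock_iff (hl : 0 < l) (hk : 0 < k) :
    (∀ q < m, ∀ p < n, ¬ PositionsBlock l k m n q p) ↔
      l = k ∨ (min m n ≤ l ∧ min m n ≤ k) := by
  constructor
  · intro hstable
    by_contra! hne
    rcases hne.1.lt_or_gt with hlk | hkl
    · exact hstable l (by omega) l (by omega) (positionsBlock_comm.2 (positionsBlock_self hl hlk))
    · exact hstable k (by omega) k (by omega) (positionsBlock_self hk hkl)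
  · rintro (rfl | ⟨hml, hmk⟩) q hq p hp
    · exact not_positionsBlock_of_diagonal (fun _ _ _ => blockMatched_self_iff hl) hq hp
    rcases le_total m n with hmn | hnm
    · exact not_positionsBlock_of_diagonal
        (fun _ _ _ => blockMatched_iff_eq_of_lt (by omega) (by omega)) hq hp
    · rw [positionsBlock_comm]
      exact not_positionsBlock_of_diagonal
        (fun _ _ _ => blockMatched_iff_eq_of_lt (by omega) (by omega)) hp hq

end BlockArithmetic

structure IsCommonRanking (M : Market D H) (fD : D → ℕ) (fH : H → ℕ) : Prop where
  rankHD_eq : ∀ h, M.rankHD h = fD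
  rankDH_eq : ∀ d, M.rankDH d = fH
  accD : ∀ d h, M.accD d h
  accH : ∀ h d, M.accH h d
  injective_fD : Function.Injective fD
  injective_fH : Function.Injective fH

omit [Fintype D] [Fintype H] [DecidableEq D] [DecidableEq H] in
lemma CommonPrefs.isCommonRanking {M : Market D H} (hM : CommonPrefs M) (d₀ : D) (h₀ : H) :
    IsCommonRanking M (M.rankHD h₀) (M.rankDH d₀) :=
  ⟨fun h => hM.2.2.1 h h₀, fun d => hM.2.1 d d₀, fun d h => (hM.2.2.2 d h).1,
    fun h d => (hM.2.2.2 d h).2, hM.1.2 h₀, hM.1.1 d₀⟩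

def blockIRej (fD : D → ℕ) (fH : H → ℕ) (l k : ℕ) : Finset (H × D) :=
  {x | position fD x.2 / l < position fH x.1 / k}

def blockInterviews (fD : D → ℕ) (fH : H → ℕ) (l k : ℕ) : Finset (H × D) :=
  {x | position fH x.1 / k = position fD x.2 / l}

def blockMRej (fD : D → ℕ) (fH : H → ℕ) (l k : ℕ) : Finset (D × H) :=
  {x | position fD x.1 / l = position fH x.2 / k ∧ position fH x.2 % k < position fD x.1 % l}

def blockMatching (fD : D → ℕ) (fH : H → ℕ) (l k : ℕ) : Finset (D × H) :=
  {x | BlockMatched l k (position fD x.1) (position fH x.2)}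

namespace IsCommonRanking

variable {M : Market D H} {fD : D → ℕ} {fH : H → ℕ} {l k : ℕ}

omit [Fintype H] in
lemma mem_hProps_iff (hC : IsCommonRanking M fD fH) {ι : H → ℕ} {R : Finset (H × D)} {h : H}
    {d : D} : d ∈ hProps M ι R h ↔
      (h, d) ∉ R ∧ #{y | (h, y) ∉ R ∧ position fD y < position fD d} < ι h := by
  simp [hProps, mem_topN, hC.rankHD_eq, hC.accH, filter_filter, position_lt_position_iff]

lemma mem_dKeeps_iff (hC : IsCommonRanking M fD fH) {ι : H → ℕ} {κ : D → ℕ}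
    {R : Finset (H × D)} {d : D} {h : H} : h ∈ dKeeps M ι κ R d ↔
      d ∈ hProps M ι R h ∧
        #{h' | d ∈ hProps M ι R h' ∧ position fH h' < position fH h} < κ d := by
  simp [dKeeps, mem_topN, hC.rankDH_eq, hC.accD, filter_filter, position_lt_position_iff]

omit [Fintype D] in
lemma mem_dProps_iff (hC : IsCommonRanking M fD fH) {V : Finset (H × D)} {S : Finset (D × H)}
    {d : D} {h : H} : h ∈ dProps M V S d ↔
      ((h, d) ∈ V ∧ (d, h) ∉ S) ∧
        ∀ h', (h', d) ∈ V → (d, h') ∉ S → ¬ position fH h' < position fH h := by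
  simp [dProps, mem_topN_one, hC.rankDH_eq, position_lt_position_iff]

lemma mem_hKeeps_iff (hC : IsCommonRanking M fD fH) {V : Finset (H × D)} {S : Finset (D × H)}
    {h : H} {d : D} : d ∈ hKeeps M V S h ↔
      h ∈ dProps M V S d ∧
        ∀ d', h ∈ dProps M V S d' → ¬ position fD d' < position fD d := by
  simp [hKeeps, mem_topN_one, hC.rankHD_eq, position_lt_position_iff]

lemma mem_hProps_blockIRej (hC : IsCommonRanking M fD fH) (hl : 0 < l) {h : H} {d : D} :
    d ∈ hProps M (fun _ => l) (blockIRej fD fH l k) h ↔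
      position fD d / l = position fH h / k := by
  rw [hProps, hC.rankHD_eq, mem_topN_of_mem_iff_Ico hC.injective_fD
    (a := l * (position fH h / k)) (b := Fintype.card D) fun y => by
      simp [blockIRej, hC.accH, position_lt_card, Nat.le_div_iff_mul_le_left hl],
    Nat.div_eq_iff_mul_le_lt hl]
  simp [position_lt_card]

lemma mem_dKeeps_blockIRej (hC : IsCommonRanking M fD fH) (hl : 0 < l) (hk : 0 < k) {d : D}
    {h : H} : h ∈ dKeeps M (fun _ => l) (fun _ => k) (blockIRej fD fH l k) d ↔
      position fH h / k = position fD d / l := by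
  have hproposers : ∀ h, h ∈ ({h | M.accD d h ∧
      d ∈ hProps M (fun _ => l) (blockIRej fD fH l k) h} : Finset H) ↔
        k * (position fD d / l) ≤ position fH h ∧
          position fH h < k * (position fD d / l) + k := fun h => by
    simp [hC.accD, hC.mem_hProps_blockIRej hl, eq_comm (a := position fD d / l),
      Nat.div_eq_iff_mul_le_lt hk]
  simp only [dKeeps, hC.rankDH_eq]
  rw [topN_eq_self (by rw [card_eq_of_mem_iff_Ico hC.injective_fH hproposers]; omega),
    hproposers, Nat.div_eq_iff_mul_le_lt hk]

lemma div_le_div_of_mem_hProps (hC : IsCommonRanking M fD fH) (hl : 0 < l)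
    {R : Finset (H × D)} (hR : R ⊆ blockIRej fD fH l k) {h : H} {d : D}
    (hd : d ∈ hProps M (fun _ => l) R h) : position fD d / l ≤ position fH h / k := by
  rw [hC.mem_hProps_iff] at hd
  by_contra! hlt
  rw [← Nat.add_one_le_iff, Nat.le_div_iff_mul_le_left hl, mul_add_one] at hlt
  have hsub : ({y | l * (position fH h / k) ≤ position fD y ∧ position fD y < position fD d} :
      Finset D) ⊆ ({y | (h, y) ∉ R ∧ position fD y < position fD d} : Finset D) := by
    intro y
    simp only [mem_filter, mem_univ, true_and]
    refine fun ⟨hby, hyd⟩ => ⟨fun hy => ?_, hyd⟩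
    exact (mem_filter.1 (hR hy)).2.not_ge ((Nat.le_div_iff_mul_le_left hl).2 hby)
  have := (card_le_card hsub).trans_lt hd.2
  rw [card_position_Ico hC.injective_fD] at this
  have := position_lt_card (f := fD) d
  omega

lemma mem_hProps_of_forall_rejected (hC : IsCommonRanking M fD fH) (hl : 0 < l)
    {R : Finset (H × D)} {h : H} {d : D} (hdR : (h, d) ∉ R)
    (hd : position fD d / l ≤ position fH h / k)
    (hrej : ∀ y, position fD y < position fD d →
      position fD y / l < position fH h / k → (h, y) ∈ R) :
    d ∈ hProps M (fun _ => l) R h := by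
  refine hC.mem_hProps_iff.2 ⟨hdR, ?_⟩
  have hsub : ({y | (h, y) ∉ R ∧ position fD y < position fD d} : Finset D) ⊆
      ({y | l * (position fD d / l) ≤ position fD y ∧ position fD y < position fD d} :
        Finset D) := by
    intro y
    simp only [mem_filter, mem_univ, true_and]
    refine fun ⟨hyR, hyd⟩ => ⟨?_, hyd⟩
    rw [← Nat.le_div_iff_mul_le_left hl]
    exact hd.trans (not_lt.1 fun hy => hyR (hrej y hyd hy))
  refine (card_le_card hsub).trans_lt ?_
  rw [card_position_Ico hC.injective_fD]
  have := Nat.div_add_mod (position fD d) l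
  have := Nat.mod_lt (position fD d) hl
  omega

lemma iStep_subset_blockIRej (hC : IsCommonRanking M fD fH) (hl : 0 < l) (hk : 0 < k)
    {R : Finset (H × D)} (hR : R ⊆ blockIRej fD fH l k) :
    iStep M (fun _ => l) (fun _ => k) R ⊆ blockIRej fD fH l k := by
  rintro ⟨h, d⟩ hx
  rcases mem_union.1 hx with hx | hx
  · exact hR hx
  simp only [mem_filter, mem_univ, true_and, hC.mem_dKeeps_iff, not_and, not_lt] at hx
  have hsub : ({h' | d ∈ hProps M (fun _ => l) R h' ∧ position fH h' < position fH h} :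
      Finset H) ⊆ ({h' | k * (position fD d / l) ≤ position fH h' ∧
        position fH h' < position fH h} : Finset H) := by
    intro h'
    simp only [mem_filter, mem_univ, true_and]
    exact fun ⟨hd, hh'⟩ =>
      ⟨(Nat.le_div_iff_mul_le_left hk).1 (hC.div_le_div_of_mem_hProps hl hR hd), hh'⟩
  have hcount := (hx.2 hx.1).trans (card_le_card hsub)
  rw [card_position_Ico hC.injective_fH] at hcount
  have := position_lt_card (f := fH) h
  simp only [blockIRej, mem_filter, mem_univ, true_and]
  rw [← Nat.add_one_le_iff, Nat.le_div_iff_mul_le_left hk, mul_add_one]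
  omega

lemma blockIRej_subset_of_iStep_eq (hC : IsCommonRanking M fD fH) (hl : 0 < l) (hk : 0 < k)
    {R : Finset (H × D)} (hR : R ⊆ blockIRej fD fH l k)
    (hfix : iStep M (fun _ => l) (fun _ => k) R = R) : blockIRej fD fH l k ⊆ R := by
  suffices ∀ n, ∀ d : D, position fD d = n →
      ∀ h, position fD d / l < position fH h / k → (h, d) ∈ R by
    rintro ⟨h, d⟩ hx
    exact this _ d rfl h (mem_filter.1 hx).2
  intro n
  induction n using Nat.strong_induction_on with
  | _ n ih =>
  rintro d rfl h hdh
  have hrej : ∀ h' y, position fD y < position fD d →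
      position fD y / l < position fH h' / k → (h', y) ∈ R :=
    fun h' y hy => ih _ hy y rfl h'
  by_contra hdR
  have hkept : h ∈ dKeeps M (fun _ => l) (fun _ => k) R d := by
    by_contra hnk
    refine hdR (hfix ▸ mem_union_right _ (mem_filter.2 ⟨mem_univ _, ?_, hnk⟩))
    exact hC.mem_hProps_of_forall_rejected hl hdR hdh.le (hrej h)
  -- the `k` hospitals of the block of `d` all still propose to `d`, and all rank above `h`
  have hsub : ({h' | k * (position fD d / l) ≤ position fH h' ∧
      position fH h' < k * (position fD d / l) + k} : Finset H) ⊆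
        ({h' | d ∈ hProps M (fun _ => l) R h' ∧ position fH h' < position fH h} :
          Finset H) := by
    intro h'
    simp only [mem_filter, mem_univ, true_and]
    intro hblock
    rw [← Nat.div_eq_iff_mul_le_lt hk] at hblock
    refine ⟨hC.mem_hProps_of_forall_rejected hl (fun hR' => ?_) hblock.ge (hrej h'), ?_⟩
    · exact (mem_filter.1 (hR hR')).2.ne' hblock
    · exact Nat.lt_of_div_lt_div (hblock ▸ hdh)
  have hcount := (card_le_card hsub).trans_lt (hC.mem_dKeeps_iff.1 hkept).2
  rw [card_position_Ico hC.injective_fH] at hcount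
  rw [← Nat.add_one_le_iff, Nat.le_div_iff_mul_le_left hk, mul_add_one] at hdh
  have := position_lt_card (f := fH) h
  omega

lemma iRej_eq_blockIRej (hC : IsCommonRanking M fD fH) (hl : 0 < l) (hk : 0 < k) :
    iRej M (fun _ => l) (fun _ => k) = blockIRej fD fH l k := by
  rw [iRej, mul_comm, ← Fintype.card_prod]
  exact iterate_card_eq_of_invariant (g := iStep M _ _) (fun _ => subset_union_left)
    (fun _ => hC.iStep_subset_blockIRej hl hk) (fun _ => hC.blockIRej_subset_of_iStep_eq hl hk)

lemma interviews_eq_blockInterviews (hC : IsCommonRanking M fD fH) (hl : 0 < l) (hk : 0 < k) :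
    interviews M (fun _ => l) (fun _ => k) = blockInterviews fD fH l k := by
  ext ⟨h, d⟩
  simp [interviews, hC.iRej_eq_blockIRej hl hk, hC.mem_hProps_blockIRej hl,
    hC.mem_dKeeps_blockIRej hl hk, blockInterviews, eq_comm]

lemma mem_dProps_blockMRej (hC : IsCommonRanking M fD fH) (hk : 0 < k) {d : D} {h : H} :
    h ∈ dProps M (blockInterviews fD fH l k) (blockMRej fD fH l k) d ↔
      BlockMatched l k (position fD d) (position fH h) := by
  rw [dProps, hC.rankDH_eq, mem_topN_of_mem_iff_Ico hC.injective_fH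
    (a := k * (position fD d / l) + position fD d % l) (b := k * (position fD d / l) + k)
    fun h' => by
      simp only [blockInterviews, blockMRej, mem_filter, mem_univ, true_and, not_and, not_lt,
        eq_comm (a := position fD d / l), ← Nat.div_eq_and_le_mod_iff hk]
      tauto,
    blockMatched_iff hk]
  omega

lemma mem_hKeeps_blockMRej (hC : IsCommonRanking M fD fH) (hk : 0 < k) {h : H} {d : D} :
    d ∈ hKeeps M (blockInterviews fD fH l k) (blockMRej fD fH l k) h ↔
      BlockMatched l k (position fD d) (position fH h) := by
  have hproposers : ∀ d, d ∈ ({d | h ∈ dProps M (blockInterviews fD fH l k)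
      (blockMRej fD fH l k) d} : Finset D) ↔ BlockMatched l k (position fD d) (position fH h) :=
    fun d => by simp [hC.mem_dProps_blockMRej hk]
  have hunique : #({d | h ∈ dProps M (blockInterviews fD fH l k) (blockMRej fD fH l k) d} :
      Finset D) ≤ 1 := card_le_one.2 fun d₁ h₁ d₂ h₂ => position_injective hC.injective_fD
    (((hproposers d₁).1 h₁).left_unique ((hproposers d₂).1 h₂))
  rw [hKeeps, topN_eq_self hunique, hproposers]

lemma mStep_subset_blockMRej (hC : IsCommonRanking M fD fH) (hk : 0 < k)
    {S : Finset (D × H)} (hS : S ⊆ blockMRej fD fH l k) :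
    mStep M (blockInterviews fD fH l k) S ⊆ blockMRej fD fH l k := by
  rintro ⟨d, h⟩ hx
  rcases mem_union.1 hx with hx | hx
  · exact hS hx
  simp only [mem_filter, mem_univ, true_and, hC.mem_hKeeps_iff, not_and, not_forall,
    not_not] at hx
  obtain ⟨d', hd', hd'd⟩ := hx.2 hx.1
  have hblock : position fD d / l = position fH h / k :=
    ((mem_filter.1 (hC.mem_dProps_iff.1 hx.1).1.1).2).symm
  have hblock' : position fD d' / l = position fH h / k :=
    ((mem_filter.1 (hC.mem_dProps_iff.1 hd').1.1).2).symm
  have hoff : position fD d' % l < position fD d % l :=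
    (Nat.lt_iff_mod_lt_mod_of_div_eq (hblock'.trans hblock.symm)).1 hd'd
  refine mem_filter.2 ⟨mem_univ _, hblock, not_le.1 fun hle => ?_⟩
  dsimp only at hle
  -- `d'` would rather propose to the hospital `h''` of her own offset in the block of `h`
  obtain ⟨h'', hh''⟩ := exists_position_div_mod hC.injective_fH
    (b := position fH h / k) (hoff.trans_le hle |>.trans (Nat.mod_lt _ hk))
    (by have := Nat.div_add_mod (position fH h) k
        have := position_lt_card (f := fH) h
        omega)
  refine (hC.mem_dProps_iff.1 hd').2 h'' (mem_filter.2 ⟨mem_univ _, hh''.1.trans hblock'.symm⟩)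
    (fun hS'' => (mem_filter.1 (hS hS'')).2.2.ne hh''.2) ?_
  rw [Nat.lt_iff_mod_lt_mod_of_div_eq hh''.1, hh''.2]
  omega

lemma mem_dProps_of_forall_rejected (hC : IsCommonRanking M fD fH) {S : Finset (D × H)}
    {d : D} {h : H} (hblock : position fD d / l = position fH h / k) (hdh : (d, h) ∉ S)
    (hoff : position fH h % k ≤ position fD d % l)
    (hrej : ∀ h', position fH h' < position fH h →
      (d, h') ∈ blockMRej fD fH l k → (d, h') ∈ S) :
    h ∈ dProps M (blockInterviews fD fH l k) S d := by
  refine hC.mem_dProps_iff.2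
    ⟨⟨mem_filter.2 ⟨mem_univ _, hblock.symm⟩, hdh⟩, fun h' hV' hS' hh' => ?_⟩
  have hblock' : position fH h' / k = position fH h / k := (mem_filter.1 hV').2.trans hblock
  refine hS' (hrej h' hh' (mem_filter.2 ⟨mem_univ _, hblock.trans hblock'.symm, ?_⟩))
  exact ((Nat.lt_iff_mod_lt_mod_of_div_eq hblock').1 hh').trans_le hoff

lemma blockMRej_subset_of_mStep_eq (hC : IsCommonRanking M fD fH) (hl : 0 < l)
    {S : Finset (D × H)} (hS : S ⊆ blockMRej fD fH l k)
    (hfix : mStep M (blockInterviews fD fH l k) S = S) : blockMRej fD fH l k ⊆ S := by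
  suffices ∀ n, ∀ (d : D) (h : H), position fD d + position fH h = n →
      (d, h) ∈ blockMRej fD fH l k → (d, h) ∈ S by
    rintro ⟨d, h⟩ hx
    exact this _ d h rfl hx
  intro n
  induction n using Nat.strong_induction_on with
  | _ n ih =>
  rintro d h rfl hx
  obtain ⟨hblock, hoff⟩ : position fD d / l = position fH h / k ∧
      position fH h % k < position fD d % l := (mem_filter.1 hx).2
  by_contra hdh
  have hkept : d ∈ hKeeps M (blockInterviews fD fH l k) S h := by
    by_contra hnk
    refine hdh (hfix ▸ mem_union_right _ (mem_filter.2 ⟨mem_univ _, ?_, hnk⟩))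
    exact hC.mem_dProps_of_forall_rejected (d := d) (h := h) hblock hdh hoff.le
      fun h' hh' => ih _ (by omega) d h' rfl
  -- the doctor `d''` at the offset of `h` in the block of `d` ranks above `d` and proposes to `h`
  obtain ⟨d'', hd''⟩ := exists_position_div_mod hC.injective_fD
    (b := position fD d / l) (hoff.trans (Nat.mod_lt _ hl))
    (by have := Nat.div_add_mod (position fD d) l
        have := position_lt_card (f := fD) d
        omega)
  have hd''d : position fD d'' < position fD d := by
    rw [Nat.lt_iff_mod_lt_mod_of_div_eq hd''.1, hd''.2]
    exact hoff
  refine (hC.mem_hKeeps_iff.1 hkept).2 d'' ?_ hd''d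
  refine hC.mem_dProps_of_forall_rejected (hd''.1.trans hblock) (fun hS'' => ?_) hd''.2.ge
    fun h' hh' => ih _ (by omega) d'' h' rfl
  exact (mem_filter.1 (hS hS'')).2.2.ne' hd''.2

lemma mRej_eq_blockMRej (hC : IsCommonRanking M fD fH) (hl : 0 < l) (hk : 0 < k) :
    mRej M (blockInterviews fD fH l k) = blockMRej fD fH l k := by
  rw [mRej, ← Fintype.card_prod]
  exact iterate_card_eq_of_invariant (g := mStep M _) (fun _ => subset_union_left)
    (fun _ => hC.mStep_subset_blockMRej hk) (fun _ => hC.blockMRej_subset_of_mStep_eq hl)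

lemma ikMatching_eq_blockMatching (hC : IsCommonRanking M fD fH) (hl : 0 < l) (hk : 0 < k) :
    ikMatching M (fun _ => l) (fun _ => k) = blockMatching fD fH l k := by
  ext ⟨d, h⟩
  simp [ikMatching, finalMatch, hC.interviews_eq_blockInterviews hl hk,
    hC.mRej_eq_blockMRej hl hk, hC.mem_dProps_blockMRej hk, hC.mem_hKeeps_blockMRej hk,
    blockMatching]

omit [DecidableEq D] [DecidableEq H] in
lemma blocks_blockMatching_iff (hC : IsCommonRanking M fD fH) (d : D) (h : H) :
    Blocks M (blockMatching fD fH l k) d h ↔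
      PositionsBlock l k (Fintype.card D) (Fintype.card H) (position fD d) (position fH h) := by
  simp only [PositionsBlock, ← forall_position_iff hC.injective_fH,
    ← forall_position_iff hC.injective_fD]
  simp [Blocks, blockMatching, hC.accD, hC.accH, hC.rankDH_eq, hC.rankHD_eq,
    position_lt_position_iff]

omit [DecidableEq D] [DecidableEq H] in
lemma stable_blockMatching_iff (hC : IsCommonRanking M fD fH) :
    Stable M (blockMatching fD fH l k) ↔ ∀ q < Fintype.card D, ∀ p < Fintype.card H,
      ¬ PositionsBlock l k (Fintype.card D) (Fintype.card H) q p := by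
  simp only [← forall_position_iff hC.injective_fD, ← forall_position_iff hC.injective_fH,
    Stable, hC.blocks_blockMatching_iff]

end IsCommonRanking

/-- Under common preferences, a homogeneous arrangement `(l,k)` is
adequate if and only if `l = k` or both `l, k ≥ min {|D|, |H|}`. -/
theorem homogeneous_adequate_iff
    (M : Market D H) (hM : CommonPrefs M)
    (l k : ℕ) (hl : 1 ≤ l) (hk : 1 ≤ k) :
    Adequate M (fun _ => l) (fun _ => k) ↔
      (l = k ∨ (min (Fintype.card D) (Fintype.card H) ≤ l ∧
                 min (Fintype.card D) (Fintype.card H) ≤ k)) := by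
  rcases isEmpty_or_nonempty D with hD | ⟨⟨d₀⟩⟩
  · simp [Adequate, Stable, Fintype.card_eq_zero]
  rcases isEmpty_or_nonempty H with hH | ⟨⟨h₀⟩⟩
  · simp [Adequate, Stable, Fintype.card_eq_zero]
  have hC := hM.isCommonRanking d₀ h₀
  rw [Adequate, hC.ikMatching_eq_blockMatching hl hk, hC.stable_blockMatching_iff]
  exact forall_not_positionsBlock_iff hl hk
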